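/- Let R = { (0,0,0,0,1), (0,0,1,0,1), (0,1,0,0,1), (1,1,1,0,1) } ⊆ Bool⁵ (the relation (x₁ ↔ x₂ ∧ x₃) ∧ (c₀ = 0) ∧ (c₁ = 1)). Then R is minimal in the sense that no proper nonempty subset of R generates the same co-clone: for every R' with ∅ ≠ R' ⊊ R, Pol({R'}) ≠ Pol({R}). -/

import Mathlib

/-- A Boolean relation of arity `k`: a set of `k`-tuples over `Bool`. -/
abbrev BRel (k : ℕ) := Set (Fin k → Bool)

/-- A total `m`-ary Boolean operation `f` preserves a `k`-ary relation `R`. -/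
def Preserves {m k : ℕ} (f : (Fin m → Bool) → Bool) (R : BRel k) : Prop :=
  ∀ ts : Fin m → Fin k → Bool, (∀ j, ts j ∈ R) → (fun i => f (fun j => ts j i)) ∈ R

/-- A partial `m`-ary Boolean operation (modelled with `Option Bool`; `none` =
undefined) preserves a `k`-ary relation `R`. -/
def PPreserves {m k : ℕ} (f : (Fin m → Bool) → Option Bool) (R : BRel k) : Prop :=
  ∀ ts : Fin m → Fin k → Bool, (∀ j, ts j ∈ R) →
    ∀ u : Fin k → Bool, (∀ i, f (fun j => ts j i) = some (u i)) → u ∈ R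

/-- The set of all (finitary, total) polymorphisms of a set of relations. -/
def Pol (Γ : Set (Σ k, BRel k)) : Set (Σ m, (Fin m → Bool) → Bool) :=
  { f | ∀ R ∈ Γ, Preserves f.2 R.2 }

/-- The set of all partial polymorphisms of a set of relations. -/
def pPol (Γ : Set (Σ k, BRel k)) : Set (Σ m, (Fin m → Bool) → Option Bool) :=
  { f | ∀ R ∈ Γ, PPreserves f.2 R.2 }

/-- `R` is a weak base of the co-clone it generates: every finite `Δ` with the
same polymorphisms as `R` satisfies `pPol Δ ⊆ pPol {R}`. -/
def IsWeakBase {k : ℕ} (R : BRel k) : Prop :=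
  ∀ Δ : Set (Σ k, BRel k), Δ.Finite →
    Pol Δ = Pol {⟨k, R⟩} → pPol Δ ⊆ pPol {⟨k, R⟩}

/-! Every subset of `R = {a, b, c, d}` (with `a = 00001`, `b = 00101`, `c = 01001`, `d = 11101`)
that contains `b`, `c` and `d` but not `a = b ∧ c` is not closed under the binary `∧`, which preserves `R`.
Every subset missing one of `b`, `c`, `d` is closed under the ternary majority: the majority of
three tuples of `R` is one of them, except for `maj(b, c, d) = 01101 ∉ R`. -/

namespace AndGraphRel

lemma mem_Pol_singleton_iff {m k : ℕ} {f : (Fin m → Bool) → Bool} {R : BRel k} :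
    (⟨m, f⟩ : Σ m, (Fin m → Bool) → Bool) ∈ Pol {⟨k, R⟩} ↔ Preserves f R := by
  simp [Pol]

lemma preserves_two_iff {k : ℕ} {f : (Fin 2 → Bool) → Bool} {R : BRel k} :
    Preserves f R ↔ ∀ x ∈ R, ∀ y ∈ R, (fun i => f ![x i, y i]) ∈ R := by
  refine ⟨fun h x hx y hy => ?_, fun h ts hts => ?_⟩
  · simpa only [Matrix.cons_val', Matrix.empty_val'] using
      h ![x, y] (Fin.forall_fin_two.2 ⟨hx, hy⟩)
  · have hts' : ts = ![ts 0, ts 1] := by ext j; fin_cases j <;> rfl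
    rw [hts']
    simpa only [Matrix.cons_val', Matrix.empty_val'] using h _ (hts 0) _ (hts 1)

lemma preserves_three_iff {k : ℕ} {f : (Fin 3 → Bool) → Bool} {R : BRel k} :
    Preserves f R ↔ ∀ x ∈ R, ∀ y ∈ R, ∀ z ∈ R, (fun i => f ![x i, y i, z i]) ∈ R := by
  refine ⟨fun h x hx y hy z hz => ?_, fun h ts hts => ?_⟩
  · simpa only [Matrix.cons_val', Matrix.empty_val'] using
      h ![x, y, z] (Fin.forall_fin_succ.2 ⟨hx, Fin.forall_fin_two.2 ⟨hy, hz⟩⟩)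
  · have hts' : ts = ![ts 0, ts 1, ts 2] := by ext j; fin_cases j <;> rfl
    rw [hts']
    simpa only [Matrix.cons_val', Matrix.empty_val'] using h _ (hts 0) _ (hts 1) _ (hts 2)

def andOp (v : Fin 2 → Bool) : Bool := v 0 && v 1

def majority (v : Fin 3 → Bool) : Bool := (v 0 && v 1) || (v 0 && v 2) || (v 1 && v 2)

def andGraphRel : BRel 5 := { t | (t 0 = (t 1 && t 2)) ∧ t 3 = false ∧ t 4 = true }

instance : DecidablePred (· ∈ andGraphRel) := fun _ =>
  inferInstanceAs (Decidable (_ ∧ _ ∧ _))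

def tupA : Fin 5 → Bool := ![false, false, false, false, true]
def tupB : Fin 5 → Bool := ![false, false, true, false, true]
def tupC : Fin 5 → Bool := ![false, true, false, false, true]
def tupD : Fin 5 → Bool := ![true, true, true, false, true]

lemma mem_andGraphRel_iff (t : Fin 5 → Bool) :
    t ∈ andGraphRel ↔ t = tupA ∨ t = tupB ∨ t = tupC ∨ t = tupD := by
  revert t
  decide

lemma preserves_andOp_andGraphRel : Preserves andOp andGraphRel := by
  refine preserves_two_iff.2 fun x ⟨hx0, hx3, hx4⟩ y ⟨hy0, hy3, hy4⟩ => ?_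
  simp only [andGraphRel, andOp, Set.mem_ofPred_eq, Matrix.cons_val_zero, Matrix.cons_val_one]
  simp [hx0, hy0, hx3, hx4, hy4, Bool.and_assoc, Bool.and_left_comm]

lemma not_preserves_majority_andGraphRel : ¬ Preserves majority andGraphRel := fun h =>
  absurd (preserves_three_iff.1 h tupB (by decide) tupC (by decide) tupD (by decide))
    (by decide)

lemma majority_mem_or_subset {x y z : Fin 5 → Bool}
    (hx : x ∈ andGraphRel) (hy : y ∈ andGraphRel) (hz : z ∈ andGraphRel) :
    (fun i => majority ![x i, y i, z i]) ∈ ({x, y, z} : Finset (Fin 5 → Bool)) ∨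
      {tupB, tupC, tupD} ⊆ ({x, y, z} : Finset (Fin 5 → Bool)) := by
  rw [mem_andGraphRel_iff] at hx hy hz
  rcases hx with rfl | rfl | rfl | rfl <;> rcases hy with rfl | rfl | rfl | rfl <;>
    rcases hz with rfl | rfl | rfl | rfl <;> decide

lemma preserves_majority_of_subset {R' : BRel 5} (hR' : R' ⊆ andGraphRel)
    (hmiss : ¬ (tupB ∈ R' ∧ tupC ∈ R' ∧ tupD ∈ R')) : Preserves majority R' := by
  refine preserves_three_iff.2 fun x hx y hy z hz => ?_
  have hxyz : ∀ w ∈ ({x, y, z} : Finset (Fin 5 → Bool)), w ∈ R' := by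
    simp [hx, hy, hz]
  rcases majority_mem_or_subset (hR' hx) (hR' hy) (hR' hz) with hmem | hsub
  · exact hxyz _ hmem
  · exact absurd
      ⟨hxyz _ (hsub (by simp)), hxyz _ (hsub (by simp)), hxyz _ (hsub (by simp))⟩ hmiss

lemma andGraphRel_subset_of_preserves_andOp {R' : BRel 5} (h : Preserves andOp R')
    (hb : tupB ∈ R') (hc : tupC ∈ R') (hd : tupD ∈ R') : andGraphRel ⊆ R' := by
  have ha : tupA ∈ R' := by
    have hbc : (fun i => andOp ![tupB i, tupC i]) = tupA := by decide
    exact hbc ▸ preserves_two_iff.1 h _ hb _ hc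
  intro t ht
  rcases (mem_andGraphRel_iff t).1 ht with rfl | rfl | rfl | rfl
  exacts [ha, hb, hc, hd]

end AndGraphRel

open AndGraphRel in
theorem stmt19 :
    ∀ R' : BRel 5,
      R'.Nonempty →
      R' ⊂ { t : Fin 5 → Bool | (t 0 = (t 1 && t 2)) ∧ t 3 = false ∧ t 4 = true } →
      Pol {⟨5, R'⟩} ≠
        Pol {⟨5, ({ t : Fin 5 → Bool |
          (t 0 = (t 1 && t 2)) ∧ t 3 = false ∧ t 4 = true } : BRel 5)⟩} := by
  intro R' _ hss hPol
  have hpres {m : ℕ} (f : (Fin m → Bool) → Bool) : Preserves f R' ↔ Preserves f andGraphRel := by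
    rw [← mem_Pol_singleton_iff, ← mem_Pol_singleton_iff, hPol]
    rfl
  by_cases hbcd : tupB ∈ R' ∧ tupC ∈ R' ∧ tupD ∈ R'
  · obtain ⟨hb, hc, hd⟩ := hbcd
    exact hss.2 (andGraphRel_subset_of_preserves_andOp
      ((hpres andOp).2 preserves_andOp_andGraphRel) hb hc hd)
  · exact not_preserves_majority_andGraphRel
      ((hpres majority).1 (preserves_majority_of_subset hss.1 hbcd))
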